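/- Let a ∈ ℝ, β > 0, let B ≥ 1 be a natural number and b : Fin B → ℝ. Then -log( exp(a) / ( exp(a) + (1/B)·Σ_j exp(β · b j) ) ) ≥ -( a - β · (1/B)·Σ_j b j ). That is, the contrastive (InfoNCE-style) loss with positive term e^{a} and averaged negative term E_j[e^{β b j}] upper-bounds the plain distillation objective -(a - β·E_j[b j]). -/
import Mathlib


/-- **Eqs. 9–12.** The InfoNCE-style contrastive loss with positive term `e^a`
and averaged negative term `(1/B)·Σ_j e^{β·b j}` upper-bounds the plain
distillation objective `-(a - β·(1/B)·Σ_j b j)`. -/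
theorem ckd_stmt14 (a β : ℝ) (hβ : 0 < β) (B : ℕ) (hB : 1 ≤ B) (b : Fin B → ℝ) :
    -Real.log (Real.exp a /
        (Real.exp a + (1 / (B : ℝ)) * ∑ j, Real.exp (β * b j))) ≥
      -(a - β * ((1 / (B : ℝ)) * ∑ j, b j)) := by
  have hBpos : (0 : ℝ) < B := by exact_mod_cast hB
  set S := (1 / (B : ℝ)) * ∑ j, Real.exp (β * b j) with hS
  have hSpos : 0 < S := by
    apply mul_pos (by positivity)
    apply Finset.sum_pos (fun j _ => Real.exp_pos _)
    exact ⟨⟨0, hB⟩, Finset.mem_univ _⟩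
  -- Jensen: exp of average ≤ average of exp
  have jensen : Real.exp ((1 / (B : ℝ)) * ∑ j, β * b j) ≤ S := by
    have h := convexOn_exp.map_sum_le (t := Finset.univ) (w := fun _ : Fin B => 1 / (B : ℝ))
      (p := fun j => β * b j) (fun i _ => by positivity)
      (by simp [Finset.sum_const, Finset.card_univ]; field_simp)
      (fun i _ => Set.mem_univ _)
    simp only [smul_eq_mul] at h
    rw [hS, Finset.mul_sum]
    simpa [Finset.mul_sum] using h
  have hlogS : β * ((1 / (B : ℝ)) * ∑ j, b j) ≤ Real.log S := by
    have := Real.log_le_log (Real.exp_pos _) jensen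
    rw [Real.log_exp] at this
    calc β * ((1 / (B : ℝ)) * ∑ j, b j) = (1 / (B : ℝ)) * ∑ j, β * b j := by
          rw [← Finset.mul_sum]; ring
      _ ≤ Real.log S := this
  have hden : 0 < Real.exp a + S := by positivity
  rw [Real.log_div (Real.exp_pos a).ne' hden.ne', Real.log_exp]
  have h2 : Real.log S ≤ Real.log (Real.exp a + S) :=
    Real.log_le_log hSpos (by linarith [Real.exp_pos a])
  linarith
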